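/- Let n = 9 and let j be any element of the set {170,171,172,173,174,175} ∪ {178,179,…,187} ∪ {202,203,…,207} ∪ {210,211,…,219} ∪ {226,227,…,230} ∪ {232,233,234} (40 indices in total). Then for every a ∈ Q, |ε_j a| ≤ ‖a‖. -/

import Mathlib

/-- The sign vector `ε_i ∈ {+1,-1}^9`: the `m`-th coordinate (zero-based `m`)
is `+1` iff the binary digit of `i` at position `8 - m` is `0`. -/
def eps (i : ℕ) : Fin 9 → ℝ := fun m => if Nat.testBit i (8 - (m : ℕ)) then -1 else 1

/-- The cone `Q = {a : a₁ ≥ a₂ ≥ ⋯ ≥ a₉ ≥ 0}`. -/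
def inQ (a : Fin 9 → ℝ) : Prop :=
  (∀ i j : Fin 9, i ≤ j → a j ≤ a i) ∧ ∀ i, 0 ≤ a i

/-!
Write `a ∈ Q` as a nonnegative combination `a = ∑ₖ dₖ 1_{[0,k]}` of indicators of initial
segments, with `dₖ = aₖ - aₖ₊₁`. Expanding both sides as quadratic forms in `d`,
`(εa)² = ∑ dₖ dₗ SₖSₗ` and `‖a‖² = ∑ dₖ dₗ (min(k,l) + 1)`, where `Sₖ` are the prefix sums of `ε`.
So it suffices that `SₖSₗ ≤ min(k,l) + 1` for all `k, l`, a finite check on the 40 sign vectors.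
-/

open Finset

theorem sq_dotProduct_sum_smul_le {ι κ : Type*} [Fintype ι] [Fintype κ] (x : ι → ℝ)
    (v : κ → ι → ℝ) (d : κ → ℝ) (hd : ∀ k, 0 ≤ d k)
    (hv : ∀ k l, (x ⬝ᵥ v k) * (x ⬝ᵥ v l) ≤ v k ⬝ᵥ v l) :
    (x ⬝ᵥ ∑ k, d k • v k) ^ 2 ≤ (∑ k, d k • v k) ⬝ᵥ ∑ k, d k • v k :=
  calc (x ⬝ᵥ ∑ k, d k • v k) ^ 2 = ∑ k, ∑ l, d k * d l * ((x ⬝ᵥ v k) * (x ⬝ᵥ v l)) := by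
        simp only [sq, dotProduct_sum, dotProduct_smul, smul_eq_mul, sum_mul_sum]
        exact sum_congr rfl fun k _ => sum_congr rfl fun l _ => by ring
    _ ≤ ∑ k, ∑ l, d k * d l * (v k ⬝ᵥ v l) := by
        gcongr with k _ l _
        exacts [mul_nonneg (hd k) (hd l), hv k l]
    _ = (∑ k, d k • v k) ⬝ᵥ ∑ k, d k • v k := by
        simp only [sum_dotProduct, dotProduct_sum, smul_dotProduct, dotProduct_smul, smul_eq_mul,
          mul_sum, mul_assoc]
        exact sum_congr rfl fun k _ => sum_congr rfl fun l _ => by rw [dotProduct_comm]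

def prefixIndicator {n : ℕ} (k : Fin n) : Fin n → ℝ := fun i => if i ≤ k then 1 else 0

theorem dotProduct_prefixIndicator {n : ℕ} (x : Fin n → ℝ) (k : Fin n) :
    x ⬝ᵥ prefixIndicator k = ∑ i ∈ Iic k, x i := by
  simp only [dotProduct, prefixIndicator, mul_ite, mul_one, mul_zero, ← sum_filter,
    filter_ge_eq_Iic]

theorem prefixIndicator_dotProduct_prefixIndicator {n : ℕ} (k l : Fin n) :
    prefixIndicator k ⬝ᵥ prefixIndicator l = (min k l : ℕ) + 1 := by
  simp only [dotProduct, prefixIndicator, mul_ite, mul_one, mul_zero, ← ite_and, ← le_min_iff,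
    ← sum_filter, filter_ge_eq_Iic]
  simp [Fin.card_Iic, min_comm]

theorem exists_nonneg_eq_sum_smul_prefixIndicator {n : ℕ} {a : Fin n → ℝ} (ha : Antitone a)
    (ha₀ : 0 ≤ a) : ∃ d : Fin n → ℝ, (∀ k, 0 ≤ d k) ∧ a = ∑ k, d k • prefixIndicator k := by
  set f : ℕ → ℝ := fun m => if h : m < n then a ⟨m, h⟩ else 0 with hf
  refine ⟨fun k => f k - f (k + 1), fun k => ?_, funext fun i => ?_⟩
  · simp only [hf, k.isLt, dif_pos, sub_nonneg]
    split_ifs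
    · exact ha (Fin.mk_le_mk.2 k.val.le_succ)
    · exact ha₀ k
  · simp only [Finset.sum_apply, Pi.smul_apply, prefixIndicator, smul_eq_mul, mul_ite, mul_one,
      mul_zero, Fin.le_iff_val_le_val]
    rw [Fin.sum_univ_eq_sum_range (fun m => if i.val ≤ m then f m - f (m + 1) else 0),
      ← sum_filter, range_eq_Ico, Ico_filter_le, max_eq_right (Nat.zero_le _)]
    calc a i = -(f n - f i) := by simp [hf]
      _ = _ := by rw [← sum_Ico_sub _ i.isLt.le, ← sum_neg_distrib]; simp

theorem sq_dotProduct_le_of_prefix_sums {n : ℕ} (x : Fin n → ℝ) {a : Fin n → ℝ}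
    (ha : Antitone a) (ha₀ : 0 ≤ a)
    (hx : ∀ k l : Fin n, (∑ i ∈ Iic k, x i) * (∑ i ∈ Iic l, x i) ≤ (min k l : ℕ) + 1) :
    (x ⬝ᵥ a) ^ 2 ≤ a ⬝ᵥ a := by
  obtain ⟨d, hd, rfl⟩ := exists_nonneg_eq_sum_smul_prefixIndicator ha ha₀
  refine sq_dotProduct_sum_smul_le x _ d hd fun k l => ?_
  rw [prefixIndicator_dotProduct_prefixIndicator, dotProduct_prefixIndicator,
    dotProduct_prefixIndicator]
  exact hx k l

def epsInt (i : ℕ) (m : Fin 9) : ℤ := if Nat.testBit i (8 - (m : ℕ)) then -1 else 1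

theorem eps_eq_cast_epsInt (i : ℕ) (m : Fin 9) : eps i m = epsInt i m := by
  unfold eps epsInt
  split_ifs <;> norm_num

theorem stmt_19 (j : ℕ)
    (hj : j ∈ ({170, 171, 172, 173, 174, 175,
                178, 179, 180, 181, 182, 183, 184, 185, 186, 187,
                202, 203, 204, 205, 206, 207,
                210, 211, 212, 213, 214, 215, 216, 217, 218, 219,
                226, 227, 228, 229, 230,
                232, 233, 234} : Finset ℕ))
    (a : Fin 9 → ℝ) (ha : inQ a) :
    |∑ i, eps j i * a i| ≤ Real.sqrt (∑ i, a i ^ 2) := by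
  have hsigns : ∀ k l : Fin 9,
      (∑ i ∈ Iic k, epsInt j i) * (∑ i ∈ Iic l, epsInt j i) ≤ (min k l : ℕ) + 1 := by
    revert j
    decide
  have hsq := sq_dotProduct_le_of_prefix_sums (eps j) (fun _ _ h => ha.1 _ _ h) ha.2 fun k l => by
    simp only [eps_eq_cast_epsInt]
    exact_mod_cast hsigns k l
  exact Real.abs_le_sqrt (by simpa only [dotProduct, sq] using hsq)
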